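/- If T ∈ A⊗B⊗C = ℂ^a⊗ℂ^m⊗ℂ^m is 1_A-generic with T_A(α₀) invertible, and T has border rank at most m, then the subspace T(A*)T_A(α₀)⁻¹ ⊆ End(C) is abelian: any two of its elements commute. -/
import Mathlib


open Matrix

/-- The contraction `T_A(α) : B* → C` of `T ∈ ℂ^a⊗ℂ^m⊗ℂ^m` with `α ∈ A*`. -/
noncomputable def TA {a m : ℕ} (T : Fin a → Fin m → Fin m → ℂ) (α : Fin a → ℂ) :
    Matrix (Fin m) (Fin m) ℂ := fun k j => ∑ i, α i * T i j k

/-- Tensors in `ℂ^a⊗ℂ^m⊗ℂ^m` of rank at most `r`. -/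
def rankAtMost (a m r : ℕ) : Set (Fin a → Fin m → Fin m → ℂ) :=
  {S | ∃ (u : Fin r → Fin a → ℂ) (v w : Fin r → Fin m → ℂ),
    S = fun i j k => ∑ l, u l i * v l j * w l k}

lemma TA_factor {a m : ℕ} (u : Fin m → Fin a → ℂ) (v w : Fin m → Fin m → ℂ)
    (α : Fin a → ℂ) :
    TA (fun i j k => ∑ l, u l i * v l j * w l k) α =
      (Matrix.of fun k l => w l k) * Matrix.diagonal (fun l => ∑ i, α i * u l i) *
        (Matrix.of fun l j => v l j) := by
  ext k j
  simp only [TA, Matrix.mul_apply, Matrix.diagonal_apply, Matrix.of_apply, mul_ite,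
    mul_zero, Finset.sum_ite_eq', Finset.mem_univ, if_true, Finset.mul_sum]
  rw [Finset.sum_comm]
  refine Finset.sum_congr rfl fun l _ => ?_
  rw [Finset.sum_mul]
  exact Finset.sum_congr rfl fun i _ => by ring

lemma adj_comm_of_rank {a m : ℕ} (S : Fin a → Fin m → Fin m → ℂ)
    (hS : S ∈ rankAtMost a m m) (α α' α₀ : Fin a → ℂ) :
    (TA S α * (TA S α₀).adjugate) * (TA S α' * (TA S α₀).adjugate) =
      (TA S α' * (TA S α₀).adjugate) * (TA S α * (TA S α₀).adjugate) := by
  obtain ⟨u, v, w, rfl⟩ := hS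
  set W : Matrix (Fin m) (Fin m) ℂ := Matrix.of fun k l => w l k with hW
  set V : Matrix (Fin m) (Fin m) ℂ := Matrix.of fun l j => v l j with hV
  set D : (Fin a → ℂ) → Matrix (Fin m) (Fin m) ℂ :=
    fun β => Matrix.diagonal (fun l => ∑ i, β i * u l i) with hD
  have hfac : ∀ β, TA (fun i j k => ∑ l, u l i * v l j * w l k) β = W * D β * V :=
    fun β => TA_factor u v w β
  have key : ∀ β β',
      (W * D β * V * (W * D α₀ * V).adjugate) * (W * D β' * V * (W * D α₀ * V).adjugate) =
        (V.det * V.det * W.det) • (W * (D β * (D α₀).adjugate * (D β' * (D α₀).adjugate)) * W.adjugate) := by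
    intro β β'
    have hadj : (W * D α₀ * V).adjugate = V.adjugate * ((D α₀).adjugate * W.adjugate) := by
      rw [Matrix.adjugate_mul_distrib, Matrix.adjugate_mul_distrib]
    have h1 : ∀ γ, W * D γ * V * (W * D α₀ * V).adjugate
        = V.det • (W * (D γ * (D α₀).adjugate) * W.adjugate) := by
      intro γ
      rw [hadj]
      calc W * D γ * V * (V.adjugate * ((D α₀).adjugate * W.adjugate))
          = W * D γ * (V * V.adjugate) * ((D α₀).adjugate * W.adjugate) := by
            simp only [Matrix.mul_assoc]
        _ = W * D γ * (V.det • 1) * ((D α₀).adjugate * W.adjugate) := by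
            rw [Matrix.mul_adjugate]
        _ = V.det • (W * (D γ * (D α₀).adjugate) * W.adjugate) := by
            simp only [Matrix.mul_smul, Matrix.smul_mul, Matrix.mul_one, Matrix.mul_assoc]
    rw [h1 β, h1 β']
    rw [Matrix.smul_mul, Matrix.mul_smul, smul_smul]
    calc (V.det * V.det) • (W * (D β * (D α₀).adjugate) * W.adjugate *
          (W * (D β' * (D α₀).adjugate) * W.adjugate))
        = (V.det * V.det) • (W * (D β * (D α₀).adjugate) * (W.adjugate * W) *
            ((D β' * (D α₀).adjugate) * W.adjugate)) := by
          simp only [Matrix.mul_assoc]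
      _ = (V.det * V.det) • (W * (D β * (D α₀).adjugate) * (W.det • 1) *
            ((D β' * (D α₀).adjugate) * W.adjugate)) := by rw [Matrix.adjugate_mul]
      _ = (V.det * V.det * W.det) • (W * (D β * (D α₀).adjugate * (D β' * (D α₀).adjugate)) * W.adjugate) := by
          simp only [Matrix.mul_smul, Matrix.smul_mul, Matrix.mul_one, smul_smul, Matrix.mul_assoc]
  have hmid : D α * (D α₀).adjugate * (D α' * (D α₀).adjugate)
      = D α' * (D α₀).adjugate * (D α * (D α₀).adjugate) := by
    simp only [hD, Matrix.adjugate_diagonal, Matrix.diagonal_mul_diagonal]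
    exact congrArg _ (funext fun l => by ring)
  rw [hfac α, hfac α', hfac α₀, key, key, hmid]

lemma TA_continuous {a m : ℕ} (β : Fin a → ℂ) :
    Continuous fun S : Fin a → Fin m → Fin m → ℂ => TA S β := by
  apply continuous_matrix
  intro k j
  refine continuous_finset_sum _ fun i _ => continuous_const.mul ?_
  exact (continuous_apply k).comp ((continuous_apply j).comp (continuous_apply i))

/-- If `T ∈ ℂ^a⊗ℂ^m⊗ℂ^m` is `1_A`-generic with `T_A(α₀)` invertible and `T`
has border rank at most `m`, then `T(A*)T_A(α₀)⁻¹ ⊆ End(C)` is abelian: any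
two of its elements commute. -/
theorem space_abelian_of_border_rank_le {a m : ℕ}
    (T : Fin a → Fin m → Fin m → ℂ) (α₀ : Fin a → ℂ)
    (hA : IsUnit (TA T α₀).det)
    (hbr : T ∈ closure (rankAtMost a m m)) :
    ∀ α α' : Fin a → ℂ,
      (TA T α * (TA T α₀)⁻¹) * (TA T α' * (TA T α₀)⁻¹) =
        (TA T α' * (TA T α₀)⁻¹) * (TA T α * (TA T α₀)⁻¹) := by
  intro α α'
  have hadjcomm :
      (TA T α * (TA T α₀).adjugate) * (TA T α' * (TA T α₀).adjugate) =
        (TA T α' * (TA T α₀).adjugate) * (TA T α * (TA T α₀).adjugate) := by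
    have hcl : IsClosed {S : Fin a → Fin m → Fin m → ℂ |
        (TA S α * (TA S α₀).adjugate) * (TA S α' * (TA S α₀).adjugate) =
          (TA S α' * (TA S α₀).adjugate) * (TA S α * (TA S α₀).adjugate)} := by
      apply isClosed_eq
      · exact ((TA_continuous α).matrix_mul (TA_continuous α₀).matrix_adjugate).matrix_mul
          ((TA_continuous α').matrix_mul (TA_continuous α₀).matrix_adjugate)
      · exact ((TA_continuous α').matrix_mul (TA_continuous α₀).matrix_adjugate).matrix_mul
          ((TA_continuous α).matrix_mul (TA_continuous α₀).matrix_adjugate)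
    exact closure_minimal (fun S hS => adj_comm_of_rank S hS α α' α₀) hcl hbr
  rw [Matrix.inv_def]
  simp only [Matrix.mul_smul, Matrix.smul_mul]
  rw [hadjcomm]
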